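/- Let φ : ℝⁿ → ℝ be twice continuously differentiable and σ-strongly convex for some σ > 0, let f : ℝⁿ → ℝ be continuously differentiable, let g : ℝⁿ → ℝ be convex, and set Ψ := f + g. Assume Ψ is bounded below on ℝⁿ and level-bounded. Fix λ > 0, α ∈ (0, 1), t_min ∈ (0, 1], and let sequences x^k ∈ ℝⁿ, d^k ∈ ℝⁿ, t_k ∈ [t_min, 1] satisfy, for every k: d^k minimizes u ↦ ⟨∇f(x^k), u⟩ + g(x^k + u) + (1/(2λ))⟨∇²φ(x^k)u, u⟩ over ℝⁿ; x^{k+1} = x^k + t_k·d^k; and Ψ(x^{k+1}) ≤ Ψ(x^k) + α t_k (⟨∇f(x^k), d^k⟩ + g(x^k + d^k) − g(x^k)). Then: (i) the sequence {x^k} is bounded; (ii) the series ∑_{k≥0} ‖d^k‖² converges, and in particular ‖d^k‖ → 0 as k → ∞. -/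

import Mathlib

open scoped RealInnerProductSpace

/-- Hessian–vector product `∇²φ(x) d`. -/
noncomputable def hessApply {n : ℕ} (φ : EuclideanSpace ℝ (Fin n) → ℝ)
    (x d : EuclideanSpace ℝ (Fin n)) : EuclideanSpace ℝ (Fin n) :=
  fderiv ℝ (gradient φ) x d

/-!
Restricting the convex function `φ - σ/2 ‖·‖²` to the line through `x` in direction `d` and
using that a differentiable convex function of one variable has a monotone derivative gives
`⟪∇²φ(x) d, d⟫ ≥ σ ‖d‖²`. Comparing the subproblem's value at `d^k` with its value at `0` then
shows that the Armijo decrement is at most `-(σ / 2λ) ‖d^k‖²`, so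
`Ψ(x^{k+1}) + c ‖d^k‖² ≤ Ψ(x^k)` with `c = α t_min σ / 2λ > 0`. Hence `Ψ(x^k)` decreases, which
keeps `x^k` in a bounded sublevel set, and telescoping against the lower bound of `Ψ` makes
`∑ ‖d^k‖²` converge.
-/

open Set

section LineRestriction

variable {E : Type*} [NormedAddCommGroup E] [NormedSpace ℝ E]

theorem ConvexOn.comp_add_smul {h : E → ℝ} (hh : ConvexOn ℝ univ h) (x d : E) :
    ConvexOn ℝ univ (fun s : ℝ => h (x + s • d)) := by
  have := hh.comp_affineMap (AffineMap.lineMap x (x + d))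
  simpa [Function.comp_def, AffineMap.lineMap_apply, add_comm] using this

theorem hasDerivAt_add_smul (x d : E) (s : ℝ) : HasDerivAt (fun s : ℝ => x + s • d) d s := by
  simpa using ((hasDerivAt_id s).smul_const d).const_add x

theorem HasFDerivAt.hasDerivAt_comp_add_smul {F : Type*} [NormedAddCommGroup F] [NormedSpace ℝ F]
    {G : E → F} {G' : E →L[ℝ] F} {x d : E} {s : ℝ} (hG : HasFDerivAt G G' (x + s • d)) :
    HasDerivAt (fun s : ℝ => G (x + s • d)) (G' d) s :=
  hG.comp_hasDerivAt s (hasDerivAt_add_smul x d s)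

end LineRestriction

theorem ConvexOn.nonneg_of_hasDerivAt_of_hasDerivAt {ψ ψ' : ℝ → ℝ} {m s₀ : ℝ}
    (hψ : ConvexOn ℝ univ ψ) (hψ' : ∀ s, HasDerivAt ψ (ψ' s) s) (hm : HasDerivAt ψ' m s₀) :
    0 ≤ m := by
  have hderiv : deriv ψ = ψ' := funext fun s => (hψ' s).deriv
  have hmono := hψ.monotoneOn_deriv fun s _ => (hψ' s).differentiableAt
  rw [hderiv, monotoneOn_univ] at hmono
  exact hm.nonneg_of_monotone hmono

section Gradient

variable {E : Type*} [NormedAddCommGroup E] [InnerProductSpace ℝ E] [CompleteSpace E]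

theorem ContDiff.differentiable_gradient {φ : E → ℝ} (hφ : ContDiff ℝ 2 φ) :
    Differentiable ℝ (gradient φ) := by
  have : gradient φ = (InnerProductSpace.toDual ℝ E).symm ∘ fderiv ℝ φ := rfl
  rw [this]
  exact (InnerProductSpace.toDual ℝ E).symm.differentiable.comp
    ((hφ.fderiv_right (by norm_num)).differentiable one_ne_zero)

theorem mul_norm_sq_le_inner_fderiv_gradient {φ : E → ℝ} {σ : ℝ} (hφ : Differentiable ℝ φ)
    (hφsc : ConvexOn ℝ univ (fun y => φ y - σ / 2 * ‖y‖ ^ 2)) {x : E}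
    (hφ' : DifferentiableAt ℝ (gradient φ) x) (d : E) :
    σ * ‖d‖ ^ 2 ≤ ⟪fderiv ℝ (gradient φ) x d, d⟫ := by
  have hψ' (s : ℝ) : HasDerivAt (fun s : ℝ => φ (x + s • d) - σ / 2 * ‖x + s • d‖ ^ 2)
      (⟪gradient φ (x + s • d), d⟫ - σ * ⟪x + s • d, d⟫) s := by
    have h1 := (hφ (x + s • d)).hasFDerivAt.hasDerivAt_comp_add_smul
    rw [← inner_gradient_left] at h1
    exact (h1.sub (((hasDerivAt_add_smul x d s).norm_sq).const_mul (σ / 2))).congr_deriv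
      (by ring)
  have hm : HasDerivAt (fun s : ℝ => ⟪gradient φ (x + s • d), d⟫ - σ * ⟪x + s • d, d⟫)
      (⟪fderiv ℝ (gradient φ) x d, d⟫ - σ * ‖d‖ ^ 2) 0 := by
    have h1 : HasFDerivAt (gradient φ) (fderiv ℝ (gradient φ) x) (x + (0 : ℝ) • d) := by
      simpa using hφ'.hasFDerivAt
    have h2 := (h1.hasDerivAt_comp_add_smul.inner ℝ (hasDerivAt_const (0 : ℝ) d)).sub
      (((hasDerivAt_add_smul x d 0).inner ℝ (hasDerivAt_const (0 : ℝ) d)).const_mul σ)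
    exact h2.congr_deriv (by simp)
  have := (hφsc.comp_add_smul x d).nonneg_of_hasDerivAt_of_hasDerivAt hψ' hm
  linarith

end Gradient

theorem model_decrease_le_of_minimizes {E : Type*} [NormedAddCommGroup E]
    [InnerProductSpace ℝ E] {v x d : E} {g : E → ℝ} {H : E →L[ℝ] E} {σ lam : ℝ}
    (hlam : 0 < lam) (hH : σ * ‖d‖ ^ 2 ≤ ⟪H d, d⟫)
    (hmin : ∀ u, ⟪v, d⟫ + g (x + d) + (1 / (2 * lam)) * ⟪H d, d⟫ ≤
      ⟪v, u⟫ + g (x + u) + (1 / (2 * lam)) * ⟪H u, u⟫) :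
    ⟪v, d⟫ + g (x + d) - g x ≤ -(σ / (2 * lam) * ‖d‖ ^ 2) := by
  have h0 := hmin 0
  simp only [inner_zero_right, map_zero, add_zero, zero_add, mul_zero] at h0
  have hH' : σ / (2 * lam) * ‖d‖ ^ 2 ≤ 1 / (2 * lam) * ⟪H d, d⟫ := by
    rw [div_mul_eq_mul_div, one_div_mul_eq_div]
    gcongr
  linarith

theorem add_mul_le_of_le_add_mul {a a' Δ m α t tmin : ℝ} (hα : 0 ≤ α) (htmin : 0 ≤ tmin)
    (ht : tmin ≤ t) (hm : 0 ≤ m) (hΔ : Δ ≤ -m) (h : a' ≤ a + α * t * Δ) :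
    a' + α * tmin * m ≤ a := by
  have hstep : α * t * Δ ≤ -(α * tmin * m) := calc
    α * t * Δ ≤ α * t * -m := by gcongr; exact mul_nonneg hα (htmin.trans ht)
    _ ≤ -(α * tmin * m) := by nlinarith [mul_nonneg hα hm]
  linarith

theorem summable_of_succ_add_le {a b : ℕ → ℝ} (hb : ∀ k, 0 ≤ b k)
    (hab : ∀ k, a (k + 1) + b k ≤ a k) (ha : BddBelow (range a)) : Summable b := by
  obtain ⟨B, hB⟩ := ha
  refine summable_of_sum_range_le hb (c := a 0 - B) fun N => ?_
  calc ∑ k ∈ Finset.range N, b k ≤ ∑ k ∈ Finset.range N, (a k - a (k + 1)) :=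
        Finset.sum_le_sum fun k _ => by linarith [hab k]
    _ = a 0 - a N := Finset.sum_range_sub' a N
    _ ≤ a 0 - B := by linarith [hB (mem_range_self N)]

theorem abpg_global_subsequential_convergence_i_ii_general {n : ℕ}
    (φ f g : EuclideanSpace ℝ (Fin n) → ℝ) (σ : ℝ) (hσ : 0 < σ)
    (hφ : ContDiff ℝ 2 φ)
    (hφsc : ConvexOn ℝ Set.univ (fun y => φ y - σ / 2 * ‖y‖ ^ 2))
    (Ψ : EuclideanSpace ℝ (Fin n) → ℝ)
    (hbdd : BddBelow (Set.range Ψ))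
    (hlevel : ∀ r : ℝ, Bornology.IsBounded {y | Ψ y ≤ r})
    (lam : ℝ) (hlam : 0 < lam) (α : ℝ) (hα : α ∈ Set.Ioo (0 : ℝ) 1)
    (tmin : ℝ) (htmin : tmin ∈ Set.Ioc (0 : ℝ) 1)
    (x d : ℕ → EuclideanSpace ℝ (Fin n)) (t : ℕ → ℝ)
    (ht : ∀ k, t k ∈ Set.Icc tmin 1)
    (hd : ∀ k, ∀ u : EuclideanSpace ℝ (Fin n),
      ⟪gradient f (x k), d k⟫ + g (x k + d k)
          + (1 / (2 * lam)) * ⟪hessApply φ (x k) (d k), d k⟫ ≤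
        ⟪gradient f (x k), u⟫ + g (x k + u)
          + (1 / (2 * lam)) * ⟪hessApply φ (x k) u, u⟫)
    (hsuff : ∀ k, Ψ (x (k + 1)) ≤
      Ψ (x k) + α * t k * (⟪gradient f (x k), d k⟫ + g (x k + d k) - g (x k))) :
    Bornology.IsBounded (Set.range x) ∧
      Summable (fun k => ‖d k‖ ^ 2) ∧
      Filter.Tendsto (fun k => ‖d k‖) Filter.atTop (nhds 0) := by
  obtain ⟨hα0, -⟩ := hα
  obtain ⟨htmin0, -⟩ := htmin
  have hc : 0 < α * tmin * (σ / (2 * lam)) := by positivity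
  have hdecrease (k : ℕ) :
      Ψ (x (k + 1)) + α * tmin * (σ / (2 * lam)) * ‖d k‖ ^ 2 ≤ Ψ (x k) := by
    have hH := mul_norm_sq_le_inner_fderiv_gradient (hφ.differentiable two_ne_zero) hφsc
      (hφ.differentiable_gradient (x k)) (d k)
    rw [mul_assoc]
    exact add_mul_le_of_le_add_mul hα0.le htmin0.le (ht k).1 (by positivity)
      (model_decrease_le_of_minimizes hlam hH (hd k)) (hsuff k)
  have hanti : Antitone (Ψ ∘ x) := antitone_nat_of_succ_le fun k =>
    le_of_add_le_of_nonneg_left (hdecrease k) (by positivity)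
  have hsum : Summable (fun k => ‖d k‖ ^ 2) :=
    (summable_mul_left_iff hc.ne').1 <| summable_of_succ_add_le (fun k => by positivity)
      hdecrease (hbdd.mono (range_comp_subset_range x Ψ))
  refine ⟨(hlevel (Ψ (x 0))).subset ?_, hsum, ?_⟩
  · rintro _ ⟨k, rfl⟩
    exact hanti (Nat.zero_le k)
  · simpa [Real.sqrt_sq (norm_nonneg _)] using hsum.tendsto_atTop_zero.sqrt

theorem abpg_global_subsequential_convergence_i_ii {n : ℕ}
    (φ f g : EuclideanSpace ℝ (Fin n) → ℝ) (σ : ℝ) (hσ : 0 < σ)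
    (hφ : ContDiff ℝ 2 φ)
    (hφsc : ConvexOn ℝ Set.univ (fun y => φ y - σ / 2 * ‖y‖ ^ 2))
    (hf : ContDiff ℝ 1 f) (hg : ConvexOn ℝ Set.univ g)
    (Ψ : EuclideanSpace ℝ (Fin n) → ℝ) (hΨ : Ψ = fun y => f y + g y)
    (hbdd : BddBelow (Set.range Ψ))
    (hlevel : ∀ r : ℝ, Bornology.IsBounded {y | Ψ y ≤ r})
    (lam : ℝ) (hlam : 0 < lam) (α : ℝ) (hα : α ∈ Set.Ioo (0 : ℝ) 1)
    (tmin : ℝ) (htmin : tmin ∈ Set.Ioc (0 : ℝ) 1)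
    (x d : ℕ → EuclideanSpace ℝ (Fin n)) (t : ℕ → ℝ)
    (ht : ∀ k, t k ∈ Set.Icc tmin 1)
    (hd : ∀ k, ∀ u : EuclideanSpace ℝ (Fin n),
      ⟪gradient f (x k), d k⟫ + g (x k + d k)
          + (1 / (2 * lam)) * ⟪hessApply φ (x k) (d k), d k⟫ ≤
        ⟪gradient f (x k), u⟫ + g (x k + u)
          + (1 / (2 * lam)) * ⟪hessApply φ (x k) u, u⟫)
    (hupd : ∀ k, x (k + 1) = x k + t k • d k)
    (hsuff : ∀ k, Ψ (x (k + 1)) ≤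
      Ψ (x k) + α * t k * (⟪gradient f (x k), d k⟫ + g (x k + d k) - g (x k))) :
    Bornology.IsBounded (Set.range x) ∧
      Summable (fun k => ‖d k‖ ^ 2) ∧
      Filter.Tendsto (fun k => ‖d k‖) Filter.atTop (nhds 0) :=
  abpg_global_subsequential_convergence_i_ii_general φ f g σ hσ hφ hφsc Ψ hbdd hlevel lam hlam α hα
    tmin htmin x d t ht hd hsuff
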